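/- Let C be a category and M a multiplicative system in C, with localization functor L : C ⥤ C_M. For every n ≥ 0, the induced functor on diagram categories from the category of diagrams in C indexed by the linearly ordered poset {1 < 2 < ⋯ < n} to the category of diagrams in C_M indexed by the same poset (i.e. the functor given by postcomposition with L, equivalently the induced functor on categories of n−1 composable arrows) is essentially surjective: every such diagram in C_M is isomorphic to the image under L of a diagram in C. -/

import Mathlib

open CategoryTheory

/-- A multiplicative system in the sense of Definition `DefAppMult` (Fr1–Fr4). -/
structure IsMultiplicativeSystem {C : Type*} [Category C] (M : MorphismProperty C) : Prop where
  fr1 : ∀ X : C, M (𝟙 X)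
  fr2 : ∀ ⦃X Y Z W : C⦄ (f : X ⟶ Y) (g : Y ⟶ Z) (h : Z ⟶ W),
    M (f ≫ g) → M (g ≫ h) → M f ∧ M g ∧ M h ∧ M (f ≫ g ≫ h)
  fr3 : ∀ ⦃X Y : C⦄ (f g : X ⟶ Y),
    (∃ (X' : C) (s : X' ⟶ X), M s ∧ s ≫ f = s ≫ g) ↔
    (∃ (Y' : C) (t : Y ⟶ Y'), M t ∧ f ≫ t = g ≫ t)
  fr4 : ∀ ⦃X Y X' : C⦄ (s : X ⟶ Y) (f : X ⟶ X'), M s →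
    ∃ (Y' : C) (s' : X' ⟶ Y') (f' : Y ⟶ Y'), M s' ∧ s ≫ f' = f ≫ s'
  fr4' : ∀ ⦃Y Y' X' : C⦄ (f' : Y ⟶ Y') (s' : X' ⟶ Y'), M s' →
    ∃ (X : C) (s : X ⟶ Y) (f : X ⟶ X'), M s ∧ s ≫ f' = f ≫ s'

namespace IsMultiplicativeSystem

variable {C : Type*} [Category C] {M : MorphismProperty C}

theorem isMultiplicative (hM : IsMultiplicativeSystem M) : M.IsMultiplicative where
  id_mem := hM.fr1
  comp_mem f g hf hg := by
    -- Fr2 with an identity in the middle gives closure under composition.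
    simpa using (hM.fr2 f (𝟙 _) g (by simpa using hf) (by simpa using hg)).2.2.2

theorem hasLeftCalculusOfFractions (hM : IsMultiplicativeSystem M) :
    M.HasLeftCalculusOfFractions :=
  have := hM.isMultiplicative
  { exists_leftFraction := fun _ _ φ => by
      obtain ⟨_, s', f', hs', fac⟩ := hM.fr4 φ.s φ.f φ.hs
      exact ⟨MorphismProperty.LeftFraction.mk f' s' hs', fac.symm⟩
    ext := fun X' _ _ f₁ f₂ s hs h => by
      obtain ⟨Y', t, ht, fac⟩ := (hM.fr3 f₁ f₂).1 ⟨X', s, hs, h⟩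
      exact ⟨Y', t, ht, fac⟩ }

end IsMultiplicativeSystem

theorem CategoryTheory.Functor.essSurj_whiskeringRight_obj_of_isEmpty {J C D : Type*} [Category J] [IsEmpty J]
    [Category C] [Category D] (F : C ⥤ D) : ((Functor.whiskeringRight J C D).obj F).EssSurj :=
  ⟨fun _ => ⟨functorOfIsEmpty J C, ⟨Functor.isEmptyExt _ _⟩⟩⟩

/-- Lemma `LemA0_5`: for a multiplicative system `M` in `C` with localisation functor
`L = M.Q : C ⥤ C_M`, for every `n ≥ 0` the induced functor from diagrams in `C` indexed
by the linear poset with `n` elements to diagrams in `C_M` indexed by the same poset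
(postcomposition with `L`) is essentially surjective (dense). -/
theorem stmt_13 {C : Type*} [Category C] (M : MorphismProperty C)
    (hM : IsMultiplicativeSystem M) (n : ℕ) :
    ((Functor.whiskeringRight (Fin n) C M.Localization).obj M.Q).EssSurj := by
  have := hM.hasLeftCalculusOfFractions
  cases n with
  | zero => exact Functor.essSurj_whiskeringRight_obj_of_isEmpty M.Q
  | succ n => exact Localization.essSurj_mapComposableArrows M.Q M n
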